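/- Let φ : ℝ → ℝ be a C², 2π-periodic solution of φ̈(τ) + |φ(τ)|^{1/2}φ(τ) = 0 with minimal period 2π, odd, φ(0) = 0 and φ̇(0) > 0. Suppose v : ℝ → ℝ is any C², 2π-periodic function satisfying v̈(τ) + (3/2)|φ(τ)|^{1/2} v(τ) = −2φ̈(τ) for all τ. Then ∫_{−π}^{π} (φ̇(τ) + 2v̇(τ)) φ̇(τ) dτ = 10π(φ̇(0))². -/

import Mathlib

/-!
Consider a general exponent `a > 0`: `φ̈ + |φ|^a φ = 0` and `v̈ + (a+1)|φ|^a v = -2φ̈`.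
Then `u = v - (2/a) φ` solves the homogeneous linearized equation, and integrating by parts over
a period in two ways gives `∫ u̇ φ̇ = ∫ |φ|^a φ u = (a+1) ∫ |φ|^a φ u`, so `∫ u̇ φ̇ = 0` and
`∫ (φ̇ + 2v̇) φ̇ = (1 + 4/a) ∫ φ̇²`. Integrating `φ φ̈` by parts gives the virial identity
`∫ φ̇² = ∫ |φ|^(a+2)`; together with the integral of the conserved energy
`E = φ̇²/2 + |φ|^(a+2)/(a+2)` this yields `∫ φ̇² = 2(a+2)/(a+4) · T · E`. Hence the integral is
`2(a+2)/a · T · E`, which for `a = 1/2`, `T = 2π`, `E = φ̇(0)²/2` is `10π φ̇(0)²`.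
-/

open Real intervalIntegral Function

theorem Function.Periodic.deriv {𝕜 F : Type*} [NontriviallyNormedField 𝕜] [NormedAddCommGroup F]
    [NormedSpace 𝕜 F] {f : 𝕜 → F} {c : 𝕜} (h : Periodic f c) : Periodic (deriv f) c := fun x => by
  rw [← deriv_comp_add_const, show (fun y => f (y + c)) = f from funext h]

theorem ContDiff.contDiff_one_deriv {f : ℝ → ℝ} (hf : ContDiff ℝ 2 f) : ContDiff ℝ 1 (deriv f) :=
  hf.iterate_deriv' 1 1

theorem integral_mul_deriv_eq_neg_of_periodic {f g : ℝ → ℝ} {T : ℝ} (hf : ContDiff ℝ 1 f)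
    (hg : ContDiff ℝ 1 g) (hfT : Periodic f T) (hgT : Periodic g T) (t : ℝ) :
    ∫ x in t..t + T, f x * deriv g x = -∫ x in t..t + T, deriv f x * g x := by
  rw [integral_mul_deriv_eq_deriv_mul (fun x _ => (hf.differentiable one_ne_zero x).hasDerivAt)
    (fun x _ => (hg.differentiable one_ne_zero x).hasDerivAt)
    (hf.continuous_deriv_one.intervalIntegrable _ _)
    (hg.continuous_deriv_one.intervalIntegrable _ _), hfT t, hgT t, sub_self, zero_sub]

theorem abs_rpow_mul_sq_eq_sq_rpow {a : ℝ} (ha : 0 ≤ a) (y : ℝ) :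
    |y| ^ a * y ^ 2 = (y ^ 2) ^ ((a + 2) / 2) := by
  rw [← sq_abs y, ← rpow_natCast_mul (abs_nonneg y), ← rpow_natCast,
    ← rpow_add' (abs_nonneg y) (by positivity)]
  congr 1
  push_cast
  ring

theorem hasDerivAt_abs_rpow_mul_sq_div {a : ℝ} (ha : 0 ≤ a) (y : ℝ) :
    HasDerivAt (fun y => |y| ^ a * y ^ 2 / (a + 2)) (|y| ^ a * y) y := by
  -- in the form `(y ^ 2) ^ ((a + 2) / 2)` the chain rule applies also at `y = 0`
  simp_rw [abs_rpow_mul_sq_eq_sq_rpow ha]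
  have h := ((hasDerivAt_pow 2 y).rpow_const (p := (a + 2) / 2)
    (Or.inr (by linarith))).div_const (a + 2)
  refine h.congr_deriv ?_
  have hsq : (y ^ 2) ^ (a / 2) = |y| ^ a := by
    rw [← sq_abs y, ← rpow_natCast_mul (abs_nonneg y)]
    push_cast
    ring_nf
  rw [show (a + 2) / 2 - 1 = a / 2 by ring, hsq]
  field_simp
  ring

theorem continuous_abs_rpow_mul {a : ℝ} (ha : 0 ≤ a) {f g : ℝ → ℝ} (hf : Continuous f)
    (hg : Continuous g) : Continuous fun x => |f x| ^ a * g x :=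
  (hf.abs.rpow_const fun _ => Or.inr ha).mul hg

noncomputable def oscillatorEnergy (a : ℝ) (φ : ℝ → ℝ) (t : ℝ) : ℝ :=
  deriv φ t ^ 2 / 2 + |φ t| ^ a * φ t ^ 2 / (a + 2)

section Oscillator

variable {a T : ℝ} {φ : ℝ → ℝ}

theorem oscillatorEnergy_eq (ha : 0 ≤ a) (hφ : ContDiff ℝ 2 φ)
    (hode : ∀ τ, deriv (deriv φ) τ + |φ τ| ^ a * φ τ = 0) (s t : ℝ) :
    oscillatorEnergy a φ s = oscillatorEnergy a φ t := by
  have hE : ∀ τ, HasDerivAt (oscillatorEnergy a φ) 0 τ := fun τ => by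
    have hkin := ((hφ.differentiable_deriv_two τ).hasDerivAt.pow 2).div_const 2
    have hpot := (hasDerivAt_abs_rpow_mul_sq_div ha (φ τ)).comp τ
      (hφ.differentiable two_ne_zero τ).hasDerivAt
    refine (hkin.add hpot).congr_deriv ?_
    linear_combination deriv φ τ * hode τ
  exact is_const_of_deriv_eq_zero (fun τ => (hE τ).differentiableAt) (fun τ => (hE τ).deriv) s t

theorem integral_deriv_sq_eq_integral_abs_rpow_mul_sq (hφ : ContDiff ℝ 2 φ)
    (hode : ∀ τ, deriv (deriv φ) τ + |φ τ| ^ a * φ τ = 0) (hT : Periodic φ T) (t : ℝ) :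
    ∫ x in t..t + T, deriv φ x ^ 2 = ∫ x in t..t + T, |φ x| ^ a * φ x ^ 2 := by
  have h := integral_mul_deriv_eq_neg_of_periodic (hφ.of_le one_le_two) hφ.contDiff_one_deriv
    hT hT.deriv t
  have hacc : deriv (deriv φ) = fun x => -(|φ x| ^ a * φ x) :=
    funext fun x => eq_neg_of_add_eq_zero_left (hode x)
  simp only [hacc, mul_neg, integral_neg, neg_inj] at h
  simp only [sq, ← h]
  exact integral_congr fun x _ => by ring

theorem integral_deriv_sq_eq_oscillatorEnergy (ha : 0 ≤ a) (hφ : ContDiff ℝ 2 φ)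
    (hode : ∀ τ, deriv (deriv φ) τ + |φ τ| ^ a * φ τ = 0) (hT : Periodic φ T) (t s : ℝ) :
    ∫ x in t..t + T, deriv φ x ^ 2 = 2 * (a + 2) / (a + 4) * T * oscillatorEnergy a φ s := by
  have hint : ∫ x in t..t + T, oscillatorEnergy a φ x = T * oscillatorEnergy a φ s := by
    simp [oscillatorEnergy_eq ha hφ hode _ s]
  unfold oscillatorEnergy at hint ⊢
  rw [integral_add, integral_div, integral_div,
    ← integral_deriv_sq_eq_integral_abs_rpow_mul_sq hφ hode hT t] at hint
  · have h2 : a + 2 ≠ 0 := by positivity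
    have h4 : a + 4 ≠ 0 := by positivity
    field_simp at hint ⊢
    linear_combination hint
  · exact ((hφ.continuous_deriv one_le_two).pow 2).div_const 2 |>.intervalIntegrable _ _
  · exact (continuous_abs_rpow_mul ha hφ.continuous (hφ.continuous.pow 2)).div_const _
      |>.intervalIntegrable _ _

theorem integral_deriv_mul_deriv_eq_zero_of_linearized (ha : a ≠ 0)
    (hφ : ContDiff ℝ 2 φ) (hode : ∀ τ, deriv (deriv φ) τ + |φ τ| ^ a * φ τ = 0)
    (hT : Periodic φ T) {u : ℝ → ℝ} (hu : ContDiff ℝ 2 u) (huT : Periodic u T)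
    (hlin : ∀ τ, deriv (deriv u) τ + (a + 1) * |φ τ| ^ a * u τ = 0) (t : ℝ) :
    ∫ x in t..t + T, deriv u x * deriv φ x = 0 := by
  set C := ∫ x in t..t + T, |φ x| ^ a * φ x * u x
  have hφacc : deriv (deriv φ) = fun x => -(|φ x| ^ a * φ x) :=
    funext fun x => eq_neg_of_add_eq_zero_left (hode x)
  have huacc : deriv (deriv u) = fun x => -((a + 1) * (|φ x| ^ a * u x)) :=
    funext fun x => by linear_combination hlin x
  have h₁ := integral_mul_deriv_eq_neg_of_periodic (hu.of_le one_le_two) hφ.contDiff_one_deriv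
    huT hT.deriv t
  have h₂ := integral_mul_deriv_eq_neg_of_periodic (hφ.of_le one_le_two) hu.contDiff_one_deriv
    hT huT.deriv t
  simp only [hφacc, huacc, mul_neg, integral_neg, neg_inj] at h₁ h₂
  have hC₁ : C = ∫ x in t..t + T, deriv u x * deriv φ x := by
    rw [← h₁]
    exact integral_congr fun x _ => by ring
  have hC₂ : (a + 1) * C = ∫ x in t..t + T, deriv u x * deriv φ x := by
    rw [← integral_const_mul, integral_congr fun x _ => mul_comm (deriv u x) _, ← h₂]
    exact integral_congr fun x _ => by ring
  have hC : C = 0 :=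
    (mul_eq_zero.mp (by linear_combination hC₂ - hC₁ : a * C = 0)).resolve_left ha
  rw [← hC₁, hC]

theorem integral_add_two_deriv_mul_deriv (ha : 0 < a) (hφ : ContDiff ℝ 2 φ)
    (hode : ∀ τ, deriv (deriv φ) τ + |φ τ| ^ a * φ τ = 0) (hT : Periodic φ T)
    {v : ℝ → ℝ} (hv : ContDiff ℝ 2 v) (hvT : Periodic v T)
    (hvode : ∀ τ, deriv (deriv v) τ + (a + 1) * |φ τ| ^ a * v τ = -2 * deriv (deriv φ) τ)
    (t s : ℝ) :
    ∫ x in t..t + T, (deriv φ x + 2 * deriv v x) * deriv φ x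
      = 2 * (a + 2) / a * T * oscillatorEnergy a φ s := by
  have hderiv : ∀ {f g : ℝ → ℝ}, Differentiable ℝ f → Differentiable ℝ g →
      deriv (fun x => f x - 2 / a * g x) = fun x => deriv f x - 2 / a * deriv g x :=
    fun hf hg => funext fun x => by
      rw [deriv_fun_sub (hf x) ((hg x).const_mul _), deriv_const_mul _ (hg x)]
  set u := fun x => v x - 2 / a * φ x
  have hu' : deriv u = fun x => deriv v x - 2 / a * deriv φ x :=
    hderiv (hv.differentiable two_ne_zero) (hφ.differentiable two_ne_zero)
  have hu'' : deriv (deriv u) = fun x => deriv (deriv v) x - 2 / a * deriv (deriv φ) x := by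
    rw [hu']
    exact hderiv hv.differentiable_deriv_two hφ.differentiable_deriv_two
  have hlin : ∀ τ, deriv (deriv u) τ + (a + 1) * |φ τ| ^ a * u τ = 0 := fun τ => by
    simp only [hu'', u]
    field_simp
    linear_combination a * hvode τ - (2 * a + 2) * hode τ
  have horth := integral_deriv_mul_deriv_eq_zero_of_linearized ha.ne' hφ hode hT
    (hv.sub (contDiff_const.mul hφ)) (fun x => by simp only [hvT x, hT x]) hlin t
  rw [hu'] at horth
  have hφ' := hφ.continuous_deriv one_le_two
  have hv' := hv.continuous_deriv one_le_two
  calc ∫ x in t..t + T, (deriv φ x + 2 * deriv v x) * deriv φ x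
      = ∫ x in t..t + T, ((1 + 4 / a) * deriv φ x ^ 2
          + 2 * ((deriv v x - 2 / a * deriv φ x) * deriv φ x)) :=
        integral_congr fun x _ => by ring
    _ = (1 + 4 / a) * ∫ x in t..t + T, deriv φ x ^ 2 := by
        rw [integral_add, integral_const_mul, integral_const_mul, horth, mul_zero, add_zero]
        · exact (continuous_const.mul (hφ'.pow 2)).intervalIntegrable _ _
        · exact (continuous_const.mul ((hv'.sub (continuous_const.mul hφ')).mul hφ'))
            |>.intervalIntegrable _ _
    _ = 2 * (a + 2) / a * T * oscillatorEnergy a φ s := by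
        rw [integral_deriv_sq_eq_oscillatorEnergy ha.le hφ hode hT t s]
        field_simp

end Oscillator

theorem coefficient_K_value_general
    (φ : ℝ → ℝ) (hφ : ContDiff ℝ 2 φ)
    (hper : Function.Periodic φ (2 * π))
    (hode : ∀ τ, deriv (deriv φ) τ + |φ τ| ^ ((1:ℝ)/2) * φ τ = 0)
    (h0 : φ 0 = 0)
    (v : ℝ → ℝ) (hv : ContDiff ℝ 2 v)
    (hvper : Function.Periodic v (2 * π))
    (hvode : ∀ τ, deriv (deriv v) τ + (3/2) * |φ τ| ^ ((1:ℝ)/2) * v τ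
        = -2 * deriv (deriv φ) τ) :
    (∫ τ in (-π)..π, (deriv φ τ + 2 * deriv v τ) * deriv φ τ)
      = 10 * π * (deriv φ 0) ^ 2 := by
  have hvode' : ∀ τ, deriv (deriv v) τ + ((1:ℝ)/2 + 1) * |φ τ| ^ ((1:ℝ)/2) * v τ
      = -2 * deriv (deriv φ) τ := fun τ => by
    rw [← hvode τ]
    norm_num
  have hK := integral_add_two_deriv_mul_deriv (by norm_num) hφ hode hper hv hvper hvode' (-π) 0
  rw [show -π + 2 * π = π by ring, oscillatorEnergy, h0] at hK
  rw [hK]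
  norm_num
  ring

/-- The coefficient `K = ∫_{-π}^{π} (φ̇ + 2v̇)φ̇ dτ = 10π φ̇(0)²`, where `v` is any
C², 2π-periodic solution of the linearized inhomogeneous equation
`v̈ + (3/2)|φ|^{1/2}v = -2φ̈` (Lemma 2 of the paper together with the scaling law
`T'(E₀) = -2π/(5φ̇(0)²)`). -/
theorem coefficient_K_value
    (φ : ℝ → ℝ) (hφ : ContDiff ℝ 2 φ)
    (hper : Function.Periodic φ (2 * π))
    (hmin : ∀ p, 0 < p → Function.Periodic φ p → 2 * π ≤ p)
    (hode : ∀ τ, deriv (deriv φ) τ + |φ τ| ^ ((1:ℝ)/2) * φ τ = 0)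
    (hodd : ∀ τ, φ (-τ) = -φ τ)
    (h0 : φ 0 = 0) (h0' : 0 < deriv φ 0)
    (v : ℝ → ℝ) (hv : ContDiff ℝ 2 v)
    (hvper : Function.Periodic v (2 * π))
    (hvode : ∀ τ, deriv (deriv v) τ + (3/2) * |φ τ| ^ ((1:ℝ)/2) * v τ
        = -2 * deriv (deriv φ) τ) :
    (∫ τ in (-π)..π, (deriv φ τ + 2 * deriv v τ) * deriv φ τ)
      = 10 * π * (deriv φ 0) ^ 2 :=
  coefficient_K_value_general φ hφ hper hode h0 v hv hvper hvode
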